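/- arXiv:2601.22659 — 3 statements merged into one kernel-verified Lean document; each statement's English description precedes it below -/
import Mathlib

section
/- Lemma 2 (gradient part): Let θ = (α, β')' ∈ ℝ^{1+m} be arbitrary with β_m ≠ 0. Suppose the conditional distribution of X_m given X_{−m} = (X_1,…,X_{m−1})' admits a Lebesgue density almost surely and E‖X‖ < ∞. Then the population SVM objective Q(θ) = E[1 − Y(α + X'β)]₊ is differentiable at θ, with gradient ∇Q(θ) = −E[ 1{1 − Y(α + X'β) > 0} · Y · (1, X')' ]. -/
open MeasureTheory ProbabilityTheory Filter Set
open scoped ENNReal Topology RealInnerProductSpace BigOperators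

noncomputable section

/-- Euclidean space `ℝ^m`. -/
abbrev Euc (m : ℕ) := EuclideanSpace ℝ (Fin m)

/-- The sign function: `sgn z = 1` if `z ≥ 0`, `-1` otherwise. -/
def sgn (z : ℝ) : ℝ := if 0 ≤ z then 1 else -1

/-- The hinge function `[1 - z]₊ = max (1 - z) 0`. -/
def hinge (z : ℝ) : ℝ := max (1 - z) 0

/-- `paramOf a b = (a, b')' ∈ ℝ^{1+m}`. -/
def paramOf {m : ℕ} (a : ℝ) (b : Euc m) : Euc (m + 1) :=
  WithLp.toLp 2 (fun i => (Fin.cons a (fun j => b j) : Fin (m + 1) → ℝ) i)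

/-- `tl x = (1, x')'`, the covariate vector augmented by the constant 1,
so that `⟪θ, tl x⟫ = α + x'β` for `θ = (α, β')'`. -/
def tl {m : ℕ} (x : Euc m) : Euc (m + 1) := paramOf 1 x

/-- The intercept component `α` of a parameter `θ = (α, β')'`. -/
def icpt {m : ℕ} (θ : Euc (m + 1)) : ℝ := θ 0

/-- The slopeOf component `β` of a parameter `θ = (α, β')'`. -/
def slopeOf {m : ℕ} (θ : Euc (m + 1)) : Euc m := WithLp.toLp 2 (fun i => θ i.succ)

/-- Drop the last coordinate: `x ↦ x_{-m}`. -/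
def dropLast {d : ℕ} (x : Euc (d + 1)) : Euc d := WithLp.toLp 2 (fun i => x i.castSucc)

/-- Replace the last coordinate of `x` by `t`. -/
def setLast {d : ℕ} (x : Euc (d + 1)) (t : ℝ) : Euc (d + 1) :=
  WithLp.toLp 2 (fun i => if i = Fin.last d then t else x i)

variable {Ω : Type*}

/-- Assumption 1: `med(U | X) = 0` almost surely, i.e. `P{U ≤ 0 | X} ≥ 1/2` and
`P{U ≥ 0 | X} ≥ 1/2` a.s. -/
def medZero [MeasurableSpace Ω] (μ : Measure Ω) {m : ℕ} (U : Ω → ℝ) (X : Ω → Euc m) : Prop :=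
  (∀ᵐ ω ∂μ, (1 / 2 : ℝ) ≤
    (μ[Set.indicator {ω' | U ω' ≤ 0} (fun _ => (1 : ℝ)) | MeasurableSpace.comap X inferInstance]) ω) ∧
  (∀ᵐ ω ∂μ, (1 / 2 : ℝ) ≤
    (μ[Set.indicator {ω' | 0 ≤ U ω'} (fun _ => (1 : ℝ)) | MeasurableSpace.comap X inferInstance]) ω)

/-- Assumption 2(a), density part: the conditional distribution of `X_m` given `X_{-m}` has an
everywhere positive Lebesgue density, almost surely in `L(X_{-m})`. -/
def posCondDensity [MeasurableSpace Ω] (μ : Measure Ω) [IsFiniteMeasure μ] {d : ℕ}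
    (X : Ω → Euc (d + 1)) : Prop :=
  ∀ᵐ z ∂(μ.map (fun ω => dropLast (X ω))), ∃ f : ℝ → ℝ≥0∞, (∀ t, 0 < f t) ∧
    condDistrib (fun ω => X ω (Fin.last d)) (fun ω => dropLast (X ω)) μ z
      = MeasureTheory.volume.withDensity f

/-- The conditional distribution of `X_m` given `X_{-m}` admits a Lebesgue density, a.s. -/
def hasCondDensity [MeasurableSpace Ω] (μ : Measure Ω) [IsFiniteMeasure μ] {d : ℕ}
    (X : Ω → Euc (d + 1)) : Prop :=
  ∀ᵐ z ∂(μ.map (fun ω => dropLast (X ω))), ∃ f : ℝ → ℝ≥0∞,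
    condDistrib (fun ω => X ω (Fin.last d)) (fun ω => dropLast (X ω)) μ z
      = MeasureTheory.volume.withDensity f

/-- Assumption 2(b): `0 < P{Y = 1 | X} < 1` almost surely. -/
def ccpNondegenerate [MeasurableSpace Ω] (μ : Measure Ω) {m : ℕ}
    (Y : Ω → ℝ) (X : Ω → Euc m) : Prop :=
  ∀ᵐ ω ∂μ,
    0 < (μ[Set.indicator {ω' | Y ω' = 1} (fun _ => (1 : ℝ)) |
          MeasurableSpace.comap X inferInstance]) ω ∧
    (μ[Set.indicator {ω' | Y ω' = 1} (fun _ => (1 : ℝ)) |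
          MeasurableSpace.comap X inferInstance]) ω < 1

/-- Assumption 2(c): the support of `L(X)` is not contained in any proper linear subspace. -/
def fullSupport [MeasurableSpace Ω] (μ : Measure Ω) {m : ℕ} (X : Ω → Euc m) : Prop :=
  ∀ S : Submodule ℝ (Euc m), (∀ᵐ ω ∂μ, X ω ∈ S) → S = ⊤

/-- Assumption 4(b): the conditional Lebesgue density `p(x_m | x_{-m})` is uniformly bounded and
continuous in `x_m`. -/
def bddContCondDensity [MeasurableSpace Ω] (μ : Measure Ω) [IsFiniteMeasure μ] {d : ℕ}
    (X : Ω → Euc (d + 1)) : Prop :=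
  ∃ (K : ℝ) (f : Euc d → ℝ → ℝ), (∀ z t, 0 ≤ f z t ∧ f z t ≤ K) ∧ (∀ z, Continuous (f z)) ∧
    ∀ᵐ z ∂(μ.map (fun ω => dropLast (X ω))),
      condDistrib (fun ω => X ω (Fin.last d)) (fun ω => dropLast (X ω)) μ z
        = MeasureTheory.volume.withDensity (fun t => ENNReal.ofReal (f z t))

/-- Assumption 4(c): `x ↦ P{Y = 1 | X = x}` is continuous in `x_m`. -/
def ccpContinuousInLast [MeasurableSpace Ω] (μ : Measure Ω) {d : ℕ}
    (Y : Ω → ℝ) (X : Ω → Euc (d + 1)) : Prop :=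
  ∃ g : Euc (d + 1) → ℝ,
    ((μ[Set.indicator {ω' | Y ω' = 1} (fun _ => (1 : ℝ)) |
        MeasurableSpace.comap X inferInstance]) =ᵐ[μ] fun ω => g (X ω)) ∧
    ∀ x : Euc (d + 1), Continuous (fun t : ℝ => g (setLast x t))

/-- Assumption 5 (index dependence): `L(U | X) = L(U | V)`. -/
def indexDependence [MeasurableSpace Ω] (μ : Measure Ω) [IsFiniteMeasure μ] {m : ℕ}
    (U : Ω → ℝ) (X : Ω → Euc m) (V : Ω → ℝ) : Prop :=
  ∀ᵐ ω ∂μ, condDistrib U X μ (X ω) = condDistrib U V μ (V ω)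

/-- Assumption 6 (linearity in expectation): `E(X | V) = aV + b` for some `a, b ∈ ℝ^m`. -/
def linearCondMean [MeasurableSpace Ω] (μ : Measure Ω) {m : ℕ}
    (X : Ω → Euc m) (V : Ω → ℝ) : Prop :=
  ∃ a b : Euc m, ∀ i,
    (μ[fun ω => X ω i | MeasurableSpace.comap V inferInstance]) =ᵐ[μ]
      fun ω => a i * V ω + b i

/-- `p(v) = P{U ≤ V < v}`. -/
def pFun [MeasurableSpace Ω] (μ : Measure Ω) (U V : Ω → ℝ) (v : ℝ) : ℝ :=
  (μ {ω | U ω ≤ V ω ∧ V ω < v}).toReal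

/-- `q(v) = P{U > V > v}`. -/
def qFun [MeasurableSpace Ω] (μ : Measure Ω) (U V : Ω → ℝ) (v : ℝ) : ℝ :=
  (μ {ω | V ω < U ω ∧ v < V ω}).toReal

/-- `τ(v) = E[V · 1{U ≤ V < v}]`. -/
def tauFun [MeasurableSpace Ω] (μ : Measure Ω) (U V : Ω → ℝ) (v : ℝ) : ℝ :=
  ∫ ω, (if U ω ≤ V ω ∧ V ω < v then V ω else 0) ∂μ

/-- `σ(v) = E[V · 1{U > V > v}]`. -/
def sigFun [MeasurableSpace Ω] (μ : Measure Ω) (U V : Ω → ℝ) (v : ℝ) : ℝ :=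
  ∫ ω, (if V ω < U ω ∧ v < V ω then V ω else 0) ∂μ

/-- `τ(∞) = E[V · 1{U ≤ V}]`. -/
def tauInf [MeasurableSpace Ω] (μ : Measure Ω) (U V : Ω → ℝ) : ℝ :=
  ∫ ω, (if U ω ≤ V ω then V ω else 0) ∂μ

/-- `σ(-∞) = E[V · 1{U > V}]`. -/
def sigInf [MeasurableSpace Ω] (μ : Measure Ω) (U V : Ω → ℝ) : ℝ :=
  ∫ ω, (if V ω < U ω then V ω else 0) ∂μ

/-- Assumption 7 (non-severe imbalance): `τ(v̄) > σ(-∞)`, where `v̄ = (p⁻¹ ∘ q)(-∞)` is the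
(unique, by strict monotonicity of `p`) solution of `p(v̄) = P{U > V}` when a finite solution
exists, and `v̄ = ∞` (in which case `τ(v̄) = τ(∞)`) otherwise. -/
def nonSevereImbalance [MeasurableSpace Ω] (μ : Measure Ω) (U V : Ω → ℝ) : Prop :=
  (∃ vbar : ℝ, pFun μ U V vbar = (μ {ω | V ω < U ω}).toReal ∧
      sigInf μ U V < tauFun μ U V vbar) ∨
  ((∀ v : ℝ, pFun μ U V v < (μ {ω | V ω < U ω}).toReal) ∧ sigInf μ U V < tauInf μ U V)

/-- Population SVM objective `Q(θ) = E[1 - Y(α + X'β)]₊`. -/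
def Qpop [MeasurableSpace Ω] (μ : Measure Ω) {m : ℕ} (Y : Ω → ℝ) (X : Ω → Euc m)
    (θ : Euc (m + 1)) : ℝ :=
  ∫ ω, hinge (Y ω * ⟪θ, tl (X ω)⟫) ∂μ

/-- Restricted population SVM objective `Q•(c, r) = E[1 - Y(cV + r)]₊`. -/
def Qbul [MeasurableSpace Ω] (μ : Measure Ω) (Y V : Ω → ℝ) (c r : ℝ) : ℝ :=
  ∫ ω, hinge (Y ω * (c * V ω + r)) ∂μ

/-- Sample SVM objective `Q_n(θ) = n⁻¹ Σ [1 - Y_i(α + X_i'β)]₊ + (λ_n/n)‖β‖²`. -/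
def Qn {m : ℕ} (Ys : ℕ → Ω → ℝ) (Xs : ℕ → Ω → Euc m) (lam : ℕ → ℝ)
    (n : ℕ) (ω : Ω) (θ : Euc (m + 1)) : ℝ :=
  (1 / (n : ℝ)) * ∑ i ∈ Finset.range n, hinge (Ys i ω * ⟪θ, tl (Xs i ω)⟫)
    + (lam n / (n : ℝ)) * ‖slopeOf θ‖ ^ 2

/-- `(Y_i, X_i)` are i.i.d. copies of `(Y, X)`. -/
def iidCopies [MeasurableSpace Ω] (μ : Measure Ω) {m : ℕ} (Y : Ω → ℝ) (X : Ω → Euc m)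
    (Ys : ℕ → Ω → ℝ) (Xs : ℕ → Ω → Euc m) : Prop :=
  iIndepFun (fun n ω => (Ys n ω, Xs n ω)) μ ∧
  (∀ n, Measurable (Ys n) ∧ Measurable (Xs n)) ∧
  ∀ n, μ.map (fun ω => (Ys n ω, Xs n ω)) = μ.map (fun ω => (Y ω, X ω))

/-- `θhat n` is the (assumed to exist and be unique) minimizer of the sample SVM objective
over `Θ`, for each `n` and each sample realization. -/
def isSVMEstimator {m : ℕ} (Ys : ℕ → Ω → ℝ) (Xs : ℕ → Ω → Euc m) (lam : ℕ → ℝ)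
    (Θ : Set (Euc (m + 1))) (θhat : ℕ → Ω → Euc (m + 1)) : Prop :=
  ∀ n ω, θhat n ω ∈ Θ ∧ IsMinOn (Qn Ys Xs lam n ω) Θ (θhat n ω) ∧
    ∀ θ ∈ Θ, IsMinOn (Qn Ys Xs lam n ω) Θ θ → θ = θhat n ω

/-- Sample maximum score objective `Q̂_ms(α, β) = n⁻¹ Σ Y_i · 1{α + β'X_i ≥ 0}`. -/
def Qms {m : ℕ} (Ys : ℕ → Ω → ℝ) (Xs : ℕ → Ω → Euc m) (n : ℕ) (ω : Ω)
    (a : ℝ) (b : Euc m) : ℝ :=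
  (1 / (n : ℝ)) * ∑ i ∈ Finset.range n, Ys i ω * (if 0 ≤ a + ⟪b, Xs i ω⟫ then 1 else 0)

/-- Sample class weight `ŵ = #{Y_i = 1} / #{Y_i = -1}`. -/
def wHat (Ys : ℕ → Ω → ℝ) (n : ℕ) (ω : Ω) : ℝ :=
  (∑ i ∈ Finset.range n, if Ys i ω = 1 then (1 : ℝ) else 0) /
  (∑ i ∈ Finset.range n, if Ys i ω = -1 then (1 : ℝ) else 0)

/-- Sample class-weighted SVM objective. -/
def Qnw {m : ℕ} (Ys : ℕ → Ω → ℝ) (Xs : ℕ → Ω → Euc m) (lam : ℕ → ℝ)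
    (n : ℕ) (ω : Ω) (θ : Euc (m + 1)) : ℝ :=
  (1 / (n : ℝ)) * ∑ i ∈ Finset.range n,
      ((if Ys i ω = 1 then hinge ⟪θ, tl (Xs i ω)⟫ else 0)
        + wHat Ys n ω * (if Ys i ω = -1 then hinge (-⟪θ, tl (Xs i ω)⟫) else 0))
    + (lam n / (n : ℝ)) * ‖slopeOf θ‖ ^ 2

/-- `θhat n` is the (assumed to exist and be unique) minimizer of the sample class-weighted SVM
objective over `Θ`. -/
def isWeightedSVMEstimator {m : ℕ} (Ys : ℕ → Ω → ℝ) (Xs : ℕ → Ω → Euc m) (lam : ℕ → ℝ)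
    (Θ : Set (Euc (m + 1))) (θhat : ℕ → Ω → Euc (m + 1)) : Prop :=
  ∀ n ω, θhat n ω ∈ Θ ∧ IsMinOn (Qnw Ys Xs lam n ω) Θ (θhat n ω) ∧
    ∀ θ ∈ Θ, IsMinOn (Qnw Ys Xs lam n ω) Θ θ → θ = θhat n ω

/-!
Pointwise, `θ ↦ [1 - ⟪θ, w⟫]₊` with `w = Y · (1, X')'` is Lipschitz with constant `‖w‖` and
differentiable off the kink `⟪θ, w⟫ = 1`, so dominated differentiation under the integral gives
the gradient as soon as the kink has probability zero. Since `|Y| = 1` and `β_m ≠ 0`, the kink is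
contained in the event that `X_m` equals a measurable function of `X_{-m}`; this event is null
because the conditional law of `X_m` given `X_{-m}` has a density and therefore no atoms.
-/

lemma hinge_nonneg (z : ℝ) : 0 ≤ hinge z := le_max_right _ _

lemma hinge_le_one_add_abs (z : ℝ) : hinge z ≤ 1 + |z| :=
  max_le (by linarith [neg_abs_le z]) (by positivity)

lemma lipschitzWith_hinge : LipschitzWith 1 hinge :=
  LipschitzWith.of_dist_le_mul fun a b => by
    simpa [hinge, Real.dist_eq, abs_sub_comm] using abs_max_sub_max_le_abs (1 - a) (1 - b) 0

lemma hasDerivAt_hinge {z : ℝ} (hz : z ≠ 1) :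
    HasDerivAt hinge (if z < 1 then -1 else 0) z := by
  rcases hz.lt_or_gt with hz | hz
  · rw [if_pos hz]
    refine ((hasDerivAt_id z).const_sub 1).congr_of_eventuallyEq ?_
    filter_upwards [Iio_mem_nhds hz] with t ht
    exact max_eq_left (by linarith [ht.out])
  · rw [if_neg hz.not_gt]
    refine (hasDerivAt_const z (0 : ℝ)).congr_of_eventuallyEq ?_
    filter_upwards [Ioi_mem_nhds hz] with t ht
    exact max_eq_right (by linarith [ht.out])

section InnerProductSpace

variable {E : Type*} [NormedAddCommGroup E] [InnerProductSpace ℝ E]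

lemma lipschitzWith_hinge_inner (w : E) : LipschitzWith ‖w‖₊ fun θ : E => hinge ⟪θ, w⟫ := by
  have hlin : LipschitzWith ‖w‖₊ fun θ : E => ⟪θ, w⟫ :=
    LipschitzWith.of_dist_le_mul fun θ θ' => by
      rw [Real.dist_eq, ← inner_sub_left, dist_eq_norm, coe_nnnorm, mul_comm]
      exact abs_real_inner_le_norm _ _
  simpa only [one_mul, Function.comp_def] using lipschitzWith_hinge.comp hlin

variable [CompleteSpace E]

lemma hasGradientAt_hinge_inner {w θ : E} (h : ⟪θ, w⟫ ≠ 1) :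
    HasGradientAt (fun θ : E => hinge ⟪θ, w⟫) (-(if ⟪θ, w⟫ < 1 then w else 0)) θ := by
  have hlin : HasFDerivAt (fun θ : E => ⟪θ, w⟫) (innerSL ℝ w) θ :=
    (innerSL ℝ w).hasFDerivAt.congr_of_eventuallyEq
      (Eventually.of_forall fun _ => real_inner_comm _ _)
  rw [hasGradientAt_iff_hasFDerivAt]
  refine ((hasDerivAt_hinge h).comp_hasFDerivAt θ hlin).congr_fderiv ?_
  ext y
  split_ifs <;> simp [InnerProductSpace.toDual_apply_apply]

theorem hasGradientAt_integral_hinge_inner {Ω : Type*} [MeasurableSpace Ω] {μ : Measure Ω}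
    [IsFiniteMeasure μ] {w : Ω → E} (hw : Integrable w μ) {θ : E}
    (hkink : μ {ω | ⟪θ, w ω⟫ = 1} = 0) :
    HasGradientAt (fun θ => ∫ ω, hinge ⟪θ, w ω⟫ ∂μ)
      (-∫ ω, (if ⟪θ, w ω⟫ < 1 then w ω else 0) ∂μ) θ := by
  set g : Ω → E := fun ω => -(if ⟪θ, w ω⟫ < 1 then w ω else 0)
  have hmeas (θ' : E) : AEStronglyMeasurable (fun ω => hinge ⟪θ', w ω⟫) μ :=
    lipschitzWith_hinge.continuous.comp_aestronglyMeasurable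
      (aestronglyMeasurable_const.inner hw.1)
  have hint : Integrable (fun ω => hinge ⟪θ, w ω⟫) μ := by
    refine ((integrable_const 1).add (hw.norm.const_mul ‖θ‖)).mono' (hmeas θ)
      (ae_of_all _ fun ω => ?_)
    rw [Real.norm_of_nonneg (hinge_nonneg _)]
    exact (hinge_le_one_add_abs _).trans (add_le_add_right (abs_real_inner_le_norm _ _) 1)
  have hg : Integrable g μ :=
    (hw.indicator₀ (s := {ω | ⟪θ, w ω⟫ < 1})
      (nullMeasurableSet_lt (aestronglyMeasurable_const.inner hw.1).aemeasurable
        aemeasurable_const)).neg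
  have hderiv : ∀ᵐ ω ∂μ, HasFDerivAt (fun θ' => hinge ⟪θ', w ω⟫) (innerSL ℝ (g ω)) θ := by
    filter_upwards [measure_eq_zero_iff_ae_notMem.mp hkink] with ω hω
    -- `toDual ℝ E v` is definitionally `innerSL ℝ v`
    exact hasGradientAt_iff_hasFDerivAt.mp (hasGradientAt_hinge_inner hω)
  have hlip : ∀ᵐ ω ∂μ, LipschitzOnWith (Real.nnabs ‖w ω‖) (fun θ' => hinge ⟪θ', w ω⟫) univ :=
    ae_of_all _ fun ω => by
      rw [Real.nnabs_of_nonneg (norm_nonneg _), norm_toNNReal]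
      exact (lipschitzWith_hinge_inner (w ω)).lipschitzOnWith
  obtain ⟨-, hfderiv⟩ := hasFDerivAt_integral_of_dominated_loc_of_lip univ_mem
    (Eventually.of_forall hmeas) hint ((innerSL ℝ).continuous.comp_aestronglyMeasurable hg.1)
    hlip hw.norm hderiv
  rw [hasGradientAt_iff_hasFDerivAt, ← integral_neg]
  rwa [(innerSL ℝ).integral_comp_comm hg] at hfderiv

end InnerProductSpace

theorem measure_setOf_eq_comp_eq_zero {Ω β γ : Type*} [MeasurableSpace Ω] [MeasurableSpace β]
    [MeasurableSpace γ] [StandardBorelSpace γ] [Nonempty γ] {μ : Measure Ω} [IsFiniteMeasure μ]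
    {W : Ω → β} {Z : Ω → γ} (hW : Measurable W) (hZ : Measurable Z)
    (hatom : ∀ᵐ b ∂μ.map W, ∀ t, condDistrib Z W μ b {t} = 0) {c : β → γ} (hc : Measurable c) :
    μ {ω | Z ω = c (W ω)} = 0 := by
  have hS : MeasurableSet {p : β × γ | p.2 = c p.1} :=
    measurableSet_eq_fun measurable_snd (hc.comp measurable_fst)
  calc μ {ω | Z ω = c (W ω)} = μ.map (fun ω => (W ω, Z ω)) {p | p.2 = c p.1} :=
        (Measure.map_apply (hW.prodMk hZ) hS).symm
    _ = ∫⁻ b, condDistrib Z W μ b {c b} ∂μ.map W := by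
        rw [← compProd_map_condDistrib hZ.aemeasurable, Measure.compProd_apply hS]
        rfl
    _ = 0 := by
        rw [lintegral_congr_ae (hatom.mono fun b hb => hb (c b)), lintegral_zero]

theorem hasCondDensity.ae_condDistrib_singleton_eq_zero {Ω : Type*} [MeasurableSpace Ω]
    {μ : Measure Ω} [IsFiniteMeasure μ] {d : ℕ} {X : Ω → Euc (d + 1)} (h : hasCondDensity μ X) :
    ∀ᵐ z ∂μ.map (fun ω => dropLast (X ω)), ∀ t,
      condDistrib (fun ω => X ω (Fin.last d)) (fun ω => dropLast (X ω)) μ z {t} = 0 := by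
  filter_upwards [h] with z ⟨f, hf⟩ t
  rw [hf, withDensity_apply f (measurableSet_singleton t),
    setLIntegral_measure_zero _ _ (measure_singleton t)]

lemma continuous_tl {m : ℕ} : Continuous (tl (m := m)) := by
  unfold tl paramOf
  fun_prop

lemma continuous_dropLast {d : ℕ} : Continuous (dropLast (d := d)) := by
  unfold dropLast
  fun_prop

lemma norm_tl_le {m : ℕ} (x : Euc m) : ‖tl x‖ ≤ 1 + ‖x‖ := by
  have h : ‖tl x‖ ^ 2 = 1 + ‖x‖ ^ 2 := by
    rw [EuclideanSpace.norm_eq, EuclideanSpace.norm_eq, Real.sq_sqrt (by positivity),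
      Real.sq_sqrt (by positivity)]
    simp [tl, paramOf, Fin.sum_univ_succ]
  nlinarith [norm_nonneg x, norm_nonneg (tl x)]

lemma inner_tl_eq {d : ℕ} (θ : Euc (d + 2)) (x : Euc (d + 1)) :
    ⟪θ, tl x⟫ = (θ 0 + ∑ i : Fin d, θ i.castSucc.succ * dropLast x i)
      + θ (Fin.last (d + 1)) * x (Fin.last d) := by
  rw [PiLp.inner_apply]
  simp only [RCLike.inner_apply, conj_trivial]
  rw [Fin.sum_univ_succ]
  simp only [tl, paramOf, Fin.cons_zero, Fin.cons_succ]
  rw [Fin.sum_univ_castSucc]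
  simp [dropLast, Fin.succ_last, mul_comm]
  ring

theorem measure_inner_tl_eq_zero {Ω : Type*} [MeasurableSpace Ω] {μ : Measure Ω}
    [IsFiniteMeasure μ] {d : ℕ} {X : Ω → Euc (d + 1)} (hX : Measurable X)
    (hdens : hasCondDensity μ X) {θ : Euc (d + 2)} (hβ : θ (Fin.last (d + 1)) ≠ 0) (s : ℝ) :
    μ {ω | ⟪θ, tl (X ω)⟫ = s} = 0 := by
  convert measure_setOf_eq_comp_eq_zero (W := fun ω => dropLast (X ω))
    (continuous_dropLast.measurable.comp hX) (by fun_prop)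
    hdens.ae_condDistrib_singleton_eq_zero (c := fun z =>
      (s - (θ 0 + ∑ i : Fin d, θ i.castSucc.succ * z i)) / θ (Fin.last (d + 1))) (by fun_prop)
    using 2
  ext ω
  rw [mem_ofPred_eq, mem_ofPred_eq, inner_tl_eq, eq_div_iff hβ]
  constructor <;> intro h <;> linarith

/-- Lemma 2, gradient part: If `β_m ≠ 0`, the conditional distribution of `X_m`
given `X_{-m}` admits a Lebesgue density a.s., and `E‖X‖ < ∞`, then the population SVM
objective `Q(θ) = E[1 - Y(α + X'β)]₊` is differentiable at `θ` with gradient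
`∇Q(θ) = -E[1{1 - Y(α + X'β) > 0} · Y · (1, X')']`. -/
theorem stmt_2
    {Ω : Type*} [MeasurableSpace Ω] (μ : Measure Ω) [IsProbabilityMeasure μ]
    {d : ℕ} (Y : Ω → ℝ) (X : Ω → Euc (d + 1))
    (hval : ∀ ω, Y ω = 1 ∨ Y ω = -1)
    (hYm : Measurable Y) (hXm : Measurable X)
    (hdens : hasCondDensity μ X)
    (hint : Integrable (fun ω => ‖X ω‖) μ)
    (θ : Euc (d + 2)) (hβm : θ (Fin.last (d + 1)) ≠ 0) :
    HasGradientAt (Qpop μ Y X)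
      (-∫ ω, (if 0 < 1 - Y ω * ⟪θ, tl (X ω)⟫ then Y ω else 0) • tl (X ω) ∂μ) θ := by
  set w : Ω → Euc (d + 2) := fun ω => Y ω • tl (X ω)
  have habs (ω : Ω) : |Y ω| = 1 := by rcases hval ω with h | h <;> simp [h]
  have hQ : Qpop μ Y X = fun θ => ∫ ω, hinge ⟪θ, w ω⟫ ∂μ := by
    funext θ
    simp only [Qpop, w, inner_smul_right]
  have hw : Integrable w μ := by
    refine ((integrable_const 1).add hint).mono'
      (hYm.smul (continuous_tl.measurable.comp hXm)).aestronglyMeasurable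
      (ae_of_all _ fun ω => ?_)
    rw [norm_smul, Real.norm_eq_abs, habs, one_mul]
    exact norm_tl_le _
  have hkink : μ {ω | ⟪θ, w ω⟫ = 1} = 0 := by
    refine measure_mono_null (fun ω hω => ?_) (measure_union_null
      (measure_inner_tl_eq_zero hXm hdens hβm 1) (measure_inner_tl_eq_zero hXm hdens hβm (-1)))
    rcases hval ω with h | h
    · left
      simpa [w, h] using hω
    · right
      simpa [w, h, neg_eq_iff_eq_neg] using hω
  have hgrad : (fun ω => (if 0 < 1 - Y ω * ⟪θ, tl (X ω)⟫ then Y ω else 0) • tl (X ω)) =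
      fun ω => if ⟪θ, w ω⟫ < 1 then w ω else 0 := by
    funext ω
    simp only [w, inner_smul_right, sub_pos, ite_smul, zero_smul]
  rw [hQ, hgrad]
  exact hasGradientAt_integral_hinge_inner hw hkink

end
end

section
/- Suppose (Y_i, X_i), i = 1,…,n, are i.i.d. with Y_i ∈ {−1, 1} and X_i ℝ^m-valued, A ⊂ ℝ is compact, β* ∈ ℝ^m is such that β*'X has a Lebesgue density, and β̂ is a sequence of random vectors with β̂ →p β*. Then sup_{α ∈ A} | Q̂_ms(α, β̂) − Q̂_ms(α, β*) | →p 0 as n → ∞, where Q̂_ms(α, β) = n⁻¹ Σ_{i=1}^n Y_i·1{α + β'X_i ≥ 0}. -/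
open MeasureTheory ProbabilityTheory Filter Set
open scoped ENNReal Topology RealInnerProductSpace BigOperators

noncomputable section

variable {Ω : Type*}

/-! Moving β only changes the score indicator `1{α + β'x ≥ 0}` of observations near the
hyperplane: if `‖β̂ - β*‖ < δ` and `‖X_i‖ ≤ M`, the `i`-th term can change only when `β*'X_i`
lies within `δM` of `-α`. Covering the compact set `A` by finitely many short intervals, the
supremum over `α ∈ A` is therefore at most the empirical frequency of `{‖X‖ > M}` plus the largest
of finitely many empirical frequencies of `β*'X` falling in a short interval. By the strong law of
large numbers these frequencies converge to the corresponding probabilities, which are small: the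
first by the choice of `M`, the others because `β*'X` has a density. -/

open Metric

namespace MeasureTheory

variable [MeasurableSpace Ω] {μ : Measure Ω}

theorem Measure.AbsolutelyContinuous.exists_pos_forall_measure_lt {ν : Measure Ω}
    [IsFiniteMeasure ν] [SigmaFinite μ] (hνμ : ν ≪ μ) {ε : ℝ≥0∞}
    (hε : ε ≠ 0) : ∃ δ > 0, ∀ s, μ s < δ → ν s < ε := by
  have hfin : ∫⁻ x, ν.rnDeriv μ x ∂μ ≠ ∞ := by
    rw [Measure.lintegral_rnDeriv hνμ]
    exact measure_ne_top ν _
  obtain ⟨δ, hδ, hsmall⟩ := exists_pos_setLIntegral_lt_of_measure_lt hfin hε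
  refine ⟨δ, hδ, fun s hs => ?_⟩
  calc ν s = μ.withDensity (ν.rnDeriv μ) s := by rw [Measure.withDensity_rnDeriv_eq ν μ hνμ]
    _ = ∫⁻ x in s, ν.rnDeriv μ x ∂μ := withDensity_apply' _ s
    _ < ε := hsmall s hs

theorem exists_pos_forall_measure_ball_lt {ν : Measure ℝ} [IsFiniteMeasure ν] (hν : ν ≪ volume)
    {ε : ℝ} (hε : 0 < ε) : ∃ c > 0, ∀ x, ν.real (ball x c) < ε := by
  obtain ⟨δ, hδ, hsmall⟩ := hν.exists_pos_forall_measure_lt (ENNReal.ofReal_pos.2 hε).ne'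
  obtain ⟨r, -, hr, hrδ⟩ := ENNReal.lt_iff_exists_real_btwn.1 hδ
  refine ⟨r / 2, half_pos (ENNReal.ofReal_pos.1 hr),
    fun x => ENNReal.toReal_lt_of_lt_ofReal (hsmall _ ?_)⟩
  rwa [Real.volume_ball, mul_div_cancel₀ r two_ne_zero]

theorem tendsto_measureReal_lt_atTop [IsFiniteMeasure μ] {f : Ω → ℝ} (hf : AEMeasurable f μ) :
    Tendsto (fun r : ℝ => μ.real {ω | r < f ω}) atTop (𝓝 0) := by
  have hempty : ⋂ r : ℝ, {ω | r < f ω} = ∅ :=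
    eq_empty_of_forall_notMem fun ω hω => lt_irrefl (f ω) (mem_iInter.1 hω (f ω) :)
  have hlim := tendsto_measure_iInter_atTop (μ := μ)
    (fun r => nullMeasurableSet_lt aemeasurable_const hf)
    (fun r r' hrr' ω (hω : r' < f ω) => hrr'.trans_lt hω) ⟨0, measure_ne_top μ _⟩
  rw [hempty, measure_empty] at hlim
  exact (ENNReal.tendsto_toReal ENNReal.zero_ne_top).comp hlim

theorem tendsto_measure_union_zero {s t : ℕ → Set Ω}
    (hs : Tendsto (fun n => μ (s n)) atTop (𝓝 0)) (ht : Tendsto (fun n => μ (t n)) atTop (𝓝 0)) :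
    Tendsto (fun n => μ (s n ∪ t n)) atTop (𝓝 0) := by
  refine tendsto_of_tendsto_of_tendsto_of_le_of_le tendsto_const_nhds (by simpa using hs.add ht)
    (fun n => zero_le) (fun n => measure_union_le _ _)

theorem tendsto_measure_biUnion_finset_zero {ι : Type*} (T : Finset ι) {s : ι → ℕ → Set Ω}
    (hs : ∀ i ∈ T, Tendsto (fun n => μ (s i n)) atTop (𝓝 0)) :
    Tendsto (fun n => μ (⋃ i ∈ T, s i n)) atTop (𝓝 0) := by
  refine tendsto_of_tendsto_of_tendsto_of_le_of_le tendsto_const_nhds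
    (by simpa using tendsto_finsetSum T hs) (fun n => zero_le)
    (fun n => measure_biUnion_finset_le T _)

theorem TendstoInMeasure.tendsto_measure_le_of_lt {f : ℕ → Ω → ℝ} {c b : ℝ}
    (hf : TendstoInMeasure μ f atTop (fun _ => c)) (hcb : c < b) :
    Tendsto (fun n => μ {ω | b ≤ f n ω}) atTop (𝓝 0) := by
  refine tendsto_of_tendsto_of_tendsto_of_le_of_le tendsto_const_nhds
    (tendstoInMeasure_iff_dist.1 hf (b - c) (sub_pos.2 hcb)) (fun n => zero_le)
    (fun n => measure_mono fun ω (hω : b ≤ f n ω) => ?_)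
  show b - c ≤ dist (f n ω) c
  rw [Real.dist_eq]
  linarith [le_abs_self (f n ω - c)]

theorem tendstoInMeasure_zero_of_nonneg_of_le_off {D : ℕ → Ω → ℝ} (hD : ∀ n ω, 0 ≤ D n ω)
    (hsmall : ∀ ε > 0, ∃ bad : ℕ → Set Ω, Tendsto (fun n => μ (bad n)) atTop (𝓝 0) ∧
      ∀ n, ∀ ω ∉ bad n, D n ω ≤ ε) :
    TendstoInMeasure μ D atTop (fun _ => 0) := by
  refine tendstoInMeasure_iff_dist.2 fun ε hε => ?_
  obtain ⟨bad, hbad, hle⟩ := hsmall (ε / 2) (half_pos hε)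
  refine tendsto_of_tendsto_of_tendsto_of_le_of_le tendsto_const_nhds hbad (fun n => zero_le)
    (fun n => measure_mono fun ω (hω : ε ≤ dist (D n ω) 0) => ?_)
  by_contra hgood
  rw [Real.dist_0_eq_abs, abs_of_nonneg (hD n ω)] at hω
  linarith [hle n ω hgood]

end MeasureTheory

section EmpiricalFrequency

variable {E : Type*}

def empFreq (Z : ℕ → Ω → E) (s : Set E) (n : ℕ) (ω : Ω) : ℝ :=
  (∑ i ∈ Finset.range n, s.indicator 1 (Z i ω)) / n

theorem empFreq_nonneg (Z : ℕ → Ω → E) (s : Set E) (n : ℕ) (ω : Ω) : 0 ≤ empFreq Z s n ω :=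
  div_nonneg (Finset.sum_nonneg fun _ _ => indicator_nonneg (fun _ _ => zero_le_one) _)
    n.cast_nonneg

theorem empFreq_mono (Z : ℕ → Ω → E) {s t : Set E} (hst : s ⊆ t) (n : ℕ) (ω : Ω) :
    empFreq Z s n ω ≤ empFreq Z t n ω :=
  div_le_div_of_nonneg_right (Finset.sum_le_sum fun _ _ =>
    indicator_le_indicator_of_subset hst (fun _ => zero_le_one) _) n.cast_nonneg

variable [MeasurableSpace Ω] {μ : Measure Ω} [MeasurableSpace E]

theorem tendstoInMeasure_empFreq [IsFiniteMeasure μ] {Z : ℕ → Ω → E}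
    (hindep : Pairwise fun i j => IndepFun (Z i) (Z j) μ)
    (hident : ∀ i, IdentDistrib (Z i) (Z 0) μ μ) {s : Set E} (hs : MeasurableSet s) :
    TendstoInMeasure μ (empFreq Z s) atTop (fun _ => μ.real (Z 0 ⁻¹' s)) := by
  have hind : Measurable (s.indicator (1 : E → ℝ)) := measurable_const.indicator hs
  have hZ : ∀ i, AEMeasurable (Z i) μ := fun i => (hident i).aemeasurable_fst
  have hmean : μ[s.indicator 1 ∘ Z 0] = μ.real (Z 0 ⁻¹' s) := by
    rw [Function.comp_def, ← integral_map (hZ 0) hind.aestronglyMeasurable,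
      integral_indicator_one hs, map_measureReal_apply_of_aemeasurable (hZ 0) hs]
  have hlaw := strong_law_ae_real (fun i => s.indicator 1 ∘ Z i)
    (Integrable.of_bound (hind.comp_aemeasurable (hZ 0)).aestronglyMeasurable 1
      (Eventually.of_forall fun ω => (norm_indicator_le_norm_self _ _).trans_eq (by simp)))
    (fun i j hij => (hindep hij).comp hind hind) (fun i => (hident i).comp hind)
  rw [hmean] at hlaw
  exact tendstoInMeasure_of_tendsto_ae (fun n => ((Finset.aemeasurable_fun_sum _ fun i _ =>
    hind.comp_aemeasurable (hZ i)).div_const _).aestronglyMeasurable) hlaw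

theorem tendstoInMeasure_empFreq_of_iIndepFun_prod [IsFiniteMeasure μ] {F : Type*}
    [MeasurableSpace F] {Y : ℕ → Ω → F} {X : ℕ → Ω → E} (hY : ∀ n, Measurable (Y n))
    (hX : ∀ n, Measurable (X n)) (hindep : iIndepFun (fun n ω => (Y n ω, X n ω)) μ)
    (hident : ∀ n, μ.map (fun ω => (Y n ω, X n ω)) = μ.map (fun ω => (Y 0 ω, X 0 ω)))
    {s : Set E} (hs : MeasurableSet s) :
    TendstoInMeasure μ (empFreq X s) atTop (fun _ => μ.real (X 0 ⁻¹' s)) :=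
  tendstoInMeasure_empFreq
    (fun _ _ hij => (hindep.comp (fun _ => Prod.snd) (fun _ => measurable_snd)).indepFun hij)
    (fun i => (IdentDistrib.mk ((hY i).prodMk (hX i)).aemeasurable
      ((hY 0).prodMk (hX 0)).aemeasurable (hident i)).comp measurable_snd) hs

end EmpiricalFrequency

section Score

theorem abs_mul_ite_sub_mul_ite_le {y a p w : ℝ} (hy : |y| ≤ 1) :
    |y * (if 0 ≤ a + p then 1 else 0) - y * (if 0 ≤ a + w then 1 else 0)|
      ≤ (closedBall (-a) |p - w|).indicator 1 w := by
  by_cases hsame : 0 ≤ a + p ↔ 0 ≤ a + w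
  · simp [hsame, indicator_nonneg]
  have hw : w ∈ closedBall (-a) |p - w| := by
    rw [mem_closedBall, Real.dist_eq, sub_neg_eq_add, add_comm, abs_le]
    constructor <;> by_contra! hc <;> apply hsame <;> constructor <;>
      intro <;> linarith [le_abs_self (p - w), neg_abs_le (p - w)]
  rw [indicator_of_mem hw, Pi.one_apply, ← mul_sub, abs_mul]
  refine mul_le_one₀ hy (abs_nonneg _) ?_
  split_ifs <;> norm_num

variable {E : Type*} [NormedAddCommGroup E] [InnerProductSpace ℝ E]

theorem abs_score_sub_le {y : ℝ} (hy : |y| ≤ 1) (a M : ℝ) (b b' x : E) :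
    |y * (if 0 ≤ a + ⟪b, x⟫ then 1 else 0) - y * (if 0 ≤ a + ⟪b', x⟫ then 1 else 0)|
      ≤ {x : E | M < ‖x‖}.indicator 1 x
        + ((fun x => ⟪b', x⟫) ⁻¹' closedBall (-a) (‖b - b'‖ * M)).indicator 1 x := by
  refine (abs_mul_ite_sub_mul_ite_le hy).trans ?_
  by_cases hx : M < ‖x‖
  · rw [indicator_of_mem (show x ∈ {x : E | M < ‖x‖} from hx)]
    exact le_add_of_le_of_nonneg (indicator_le_self' (fun _ _ => zero_le_one) _)
      (indicator_nonneg (fun _ _ => zero_le_one) _)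
  · refine (indicator_le_indicator_of_subset (closedBall_subset_closedBall ?_)
      (fun _ => zero_le_one) _).trans
        (le_add_of_nonneg_left (indicator_nonneg (fun _ _ => zero_le_one) _))
    calc |⟪b, x⟫ - ⟪b', x⟫| = |⟪b - b', x⟫| := by rw [inner_sub_left]
      _ ≤ ‖b - b'‖ * ‖x‖ := abs_real_inner_le_norm _ _
      _ ≤ ‖b - b'‖ * M := mul_le_mul_of_nonneg_left (not_lt.1 hx) (norm_nonneg _)

end Score

section MaximumScore

variable {m : ℕ} {Ys : ℕ → Ω → ℝ} {Xs : ℕ → Ω → Euc m} {n : ℕ} {ω : Ω}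

theorem abs_Qms_sub_le (hY : ∀ i, |Ys i ω| ≤ 1) (a M : ℝ) (b b' : Euc m) :
    |Qms Ys Xs n ω a b - Qms Ys Xs n ω a b'|
      ≤ empFreq Xs {x | M < ‖x‖} n ω
        + empFreq Xs ((fun x => ⟪b', x⟫) ⁻¹' closedBall (-a) (‖b - b'‖ * M)) n ω := by
  calc |Qms Ys Xs n ω a b - Qms Ys Xs n ω a b'|
      = |∑ i ∈ Finset.range n, (Ys i ω * (if 0 ≤ a + ⟪b, Xs i ω⟫ then 1 else 0)
          - Ys i ω * (if 0 ≤ a + ⟪b', Xs i ω⟫ then 1 else 0))| / n := by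
        rw [Qms, Qms, ← mul_sub, ← Finset.sum_sub_distrib, one_div_mul_eq_div, abs_div,
          Nat.abs_cast]
    _ ≤ (∑ i ∈ Finset.range n, ({x : Euc m | M < ‖x‖}.indicator 1 (Xs i ω)
          + ((fun x => ⟪b', x⟫) ⁻¹' closedBall (-a) (‖b - b'‖ * M)).indicator 1 (Xs i ω))) / n :=
        div_le_div_of_nonneg_right ((Finset.abs_sum_le_sum_abs _ _).trans
          (Finset.sum_le_sum fun i _ => abs_score_sub_le (hY i) a M b b' (Xs i ω))) n.cast_nonneg
    _ = _ := by rw [Finset.sum_add_distrib, add_div]; rfl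

theorem iSup_abs_Qms_sub_le {A T : Set ℝ} {r R M C : ℝ} {b b' : Euc m}
    (hAT : A ⊆ ⋃ t ∈ T, ball t r) (hY : ∀ i, |Ys i ω| ≤ 1) (hbM : ‖b - b'‖ * M + r ≤ R)
    (hH : empFreq Xs {x | M < ‖x‖} n ω ≤ C)
    (hG : ∀ t ∈ T, empFreq Xs ((fun x => ⟪b', x⟫) ⁻¹' ball (-t) R) n ω ≤ C) :
    ⨆ a ∈ A, |Qms Ys Xs n ω a b - Qms Ys Xs n ω a b'| ≤ 2 * C := by
  have hC : 0 ≤ C := (empFreq_nonneg _ _ _ _).trans hH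
  refine Real.iSup_le (fun a => Real.iSup_le (fun ha => ?_) (by positivity)) (by positivity)
  obtain ⟨t, ht, hat⟩ := mem_iUnion₂.1 (hAT ha)
  have hball : closedBall (-a) (‖b - b'‖ * M) ⊆ ball (-t) R :=
    closedBall_subset_ball' (by rw [dist_neg_neg]; linarith [mem_ball.1 hat])
  calc _ ≤ _ + _ := abs_Qms_sub_le hY a M b b'
    _ ≤ C + C := add_le_add hH ((empFreq_mono Xs (preimage_mono hball) n ω).trans (hG t ht))
    _ = 2 * C := by ring

end MaximumScore

/-- For i.i.d. `(Y_i, X_i)` with `Y_i = ±1`, a compact `A ⊂ ℝ`, a `β*` such that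
`β*'X` has a Lebesgue density, and `β̂ →p β*`, the maximum score objective converges uniformly:
`sup_{α ∈ A} |Q̂_ms(α, β̂) - Q̂_ms(α, β*)| →p 0`. -/
theorem stmt_9
    {Ω : Type*} [MeasurableSpace Ω] (μ : Measure Ω) [IsProbabilityMeasure μ]
    {m : ℕ} (Ys : ℕ → Ω → ℝ) (Xs : ℕ → Ω → Euc m)
    (hval : ∀ n ω, Ys n ω = 1 ∨ Ys n ω = -1)
    (hmeas : ∀ n, Measurable (Ys n) ∧ Measurable (Xs n))
    (hindep : iIndepFun (fun n ω => (Ys n ω, Xs n ω)) μ)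
    (hident : ∀ n, μ.map (fun ω => (Ys n ω, Xs n ω)) = μ.map (fun ω => (Ys 0 ω, Xs 0 ω)))
    (A : Set ℝ) (hA : IsCompact A)
    (βstar : Euc m)
    (hdens : μ.map (fun ω => ⟪βstar, Xs 0 ω⟫) ≪ MeasureTheory.volume)
    (bhat : ℕ → Ω → Euc m)
    (hconv : TendstoInMeasure μ bhat atTop (fun _ => βstar)) :
    TendstoInMeasure μ
      (fun n ω => ⨆ a ∈ A, |Qms Ys Xs n ω a (bhat n ω) - Qms Ys Xs n ω a βstar|)
      atTop (fun _ => (0 : ℝ)) := by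
  have hY : ∀ i ω, |Ys i ω| ≤ 1 := fun i ω => by rcases hval i ω with h | h <;> simp [h]
  have hLLN {s : Set (Euc m)} (hs : MeasurableSet s) :=
    tendstoInMeasure_empFreq_of_iIndepFun_prod (fun n => (hmeas n).1) (fun n => (hmeas n).2)
      hindep hident hs
  have hW : Measurable fun x : Euc m => ⟪βstar, x⟫ := measurable_const.inner measurable_id
  refine tendstoInMeasure_zero_of_nonneg_of_le_off
    (fun n ω => Real.iSup_nonneg fun a => Real.iSup_nonneg fun _ => abs_nonneg _) fun ε hε => ?_
  obtain ⟨c, hc, hν⟩ := exists_pos_forall_measure_ball_lt hdens (half_pos hε)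
  obtain ⟨M, hM, hM0⟩ := (((tendsto_measureReal_lt_atTop (μ := μ)
    (hmeas 0).2.norm.aemeasurable).eventually_lt_const (half_pos hε)).and
      (eventually_ge_atTop 0)).exists
  obtain ⟨T, -, hAT⟩ := hA.elim_nhds_subcover (fun t => ball t (c / 2))
    fun t _ => ball_mem_nhds t (half_pos hc)
  set δ := c / 2 / (M + 1)
  refine ⟨fun n => {ω | δ ≤ dist (bhat n ω) βstar} ∪ ({ω | ε / 2 ≤ empFreq Xs {x | M < ‖x‖} n ω}
    ∪ ⋃ t ∈ T, {ω | ε / 2 ≤ empFreq Xs ((fun x => ⟪βstar, x⟫) ⁻¹' ball (-t) c) n ω}), ?_, ?_⟩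
  · refine tendsto_measure_union_zero (tendstoInMeasure_iff_dist.1 hconv δ (by positivity))
      (tendsto_measure_union_zero ((hLLN (measurableSet_lt measurable_const measurable_norm)
        ).tendsto_measure_le_of_lt hM) (tendsto_measure_biUnion_finset_zero T fun t _ =>
          (hLLN (hW measurableSet_ball)).tendsto_measure_le_of_lt ?_))
    exact (map_measureReal_apply (hW.comp (hmeas 0).2) measurableSet_ball).symm.trans_lt (hν _)
  · intro n ω hω
    simp only [mem_union, mem_ofPred_eq, mem_iUnion, not_or, not_exists, not_le] at hω
    obtain ⟨hb, hH, hG⟩ := hω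
    have hbM : ‖bhat n ω - βstar‖ * M + c / 2 ≤ c := by
      have hδM : δ * (M + 1) = c / 2 := div_mul_cancel₀ _ (by positivity)
      rw [← dist_eq_norm]
      nlinarith [mul_le_mul_of_nonneg_right hb.le hM0]
    exact (iSup_abs_Qms_sub_le hAT (hY · ω) hbM hH.le fun t ht => (hG t ht).le).trans_eq
      (mul_div_cancel₀ ε two_ne_zero)

end
end

section
/- There do not exist a constant γ > 0 and a function G : ℝ → ℝ such that both −γ(1 − z)₊ = log G(z) and −γ(1 + z)₊ = log(1 − G(z)) hold for all z ∈ ℝ; equivalently, there is no γ > 0 with exp(−γ(1 − z)₊) + exp(−γ(1 + z)₊) = 1 for all z ∈ ℝ. Consequently, the SVM hinge-loss objective cannot be written, up to a positive scalar multiple, as the negative log-likelihood of a binary choice quasi-maximum likelihood estimator with any error distribution function G. -/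
/-! At `z = 1` the first hinge term vanishes, so the first summand is `exp 0 = 1` while the
second is a positive exponential; the sum therefore exceeds `1`. The first claim reduces to the
second by adding the two identities for `G`. -/

open Real

theorem one_lt_exp_neg_hinge_add_exp_neg_hinge_one (γ : ℝ) :
    1 < exp (-(γ * max (1 - 1) 0)) + exp (-(γ * max (1 + 1) 0)) := by
  rw [sub_self, max_self, mul_zero, neg_zero, exp_zero, lt_add_iff_pos_right]
  exact exp_pos _

theorem not_forall_exp_neg_hinge_add_exp_neg_hinge_eq_one (γ : ℝ) :
    ¬ ∀ z : ℝ, exp (-(γ * max (1 - z) 0)) + exp (-(γ * max (1 + z) 0)) = 1 := fun h =>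
  (one_lt_exp_neg_hinge_add_exp_neg_hinge_one γ).ne' (h 1)

/-- There do not exist a constant `γ > 0` and a function `G : ℝ → ℝ` such that
`-γ(1 - z)₊ = log G(z)` and `-γ(1 + z)₊ = log(1 - G(z))` for all `z`, i.e. such that
`G(z) = exp(-γ(1 - z)₊)` and `1 - G(z) = exp(-γ(1 + z)₊)` for all `z`; equivalently, there is
no `γ > 0` with `exp(-γ(1 - z)₊) + exp(-γ(1 + z)₊) = 1` for all `z`. Hence the SVM hinge-loss
objective cannot be written, up to a positive scalar multiple, as the negative log-likelihood
of a binary choice QMLE with any error distribution function `G`. -/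
theorem stmt_16 :
    (¬ ∃ (γ : ℝ) (G : ℝ → ℝ), 0 < γ ∧ ∀ z : ℝ,
      G z = Real.exp (-(γ * max (1 - z) 0)) ∧
      1 - G z = Real.exp (-(γ * max (1 + z) 0))) ∧
    (¬ ∃ γ : ℝ, 0 < γ ∧ ∀ z : ℝ,
      Real.exp (-(γ * max (1 - z) 0)) + Real.exp (-(γ * max (1 + z) 0)) = 1) := by
  constructor
  · rintro ⟨γ, G, -, hG⟩
    refine not_forall_exp_neg_hinge_add_exp_neg_hinge_eq_one γ fun z => ?_
    obtain ⟨hG₁, hG₂⟩ := hG z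
    linarith
  · rintro ⟨γ, -, h⟩
    exact not_forall_exp_neg_hinge_add_exp_neg_hinge_eq_one γ h
end
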